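/- arXiv:2102.10221 — 5 statements merged into one kernel-verified Lean document; each statement's English description precedes it below -/
import Mathlib

section
/- Let F be a twice continuously differentiable, strictly increasing CDF with density f such that 1−F is strictly log-concave, and define g(v,u) = v·(1−F(v−u)). Then for every u ≥ 0 there exists a unique v* ≥ 0 maximizing v ↦ g(v,u) over ℝ. -/
/-!
Write `S = 1 - F`. Since `log S` is concave, it lies below its tangent line at `0`, whose slope
`-f 0 / S 0` is negative; hence `S` decays exponentially and `v * S (v - u) → 0` as `v → ∞`.
The revenue is negative for `v < 0` and positive for `v > 0`, so by compactness it attains a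
maximum, necessarily at some `v > 0`. On `(0, ∞)` the logarithm of the revenue,
`log v + log S (v - u)`, is strictly concave, so the maximizer is unique.
-/

open Real Set Filter Topology

/-- `revenue (fun ω => 1 - F ω) u v` is the paper's `g(v, u)`. -/
def revenue (S : ℝ → ℝ) (u v : ℝ) : ℝ := v * S (v - u)

section LogConcaveSurvival

variable {S : ℝ → ℝ}

lemma le_mul_exp_of_concaveOn_log (hS : ∀ x, 0 < S x)
    (hconc : ConcaveOn ℝ univ (fun x => log (S x))) {a d : ℝ}
    (hd : HasDerivAt (fun x => log (S x)) d a) {x : ℝ} (hx : a < x) :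
    S x ≤ S a * exp (d * (x - a)) := by
  have hslope := hconc.slope_le_of_hasDerivAt (mem_univ a) (mem_univ x) hx hd
  rw [slope_def_field, div_le_iff₀ (sub_pos.2 hx)] at hslope
  calc S x = exp (log (S x)) := (exp_log (hS x)).symm
    _ ≤ exp (log (S a) + d * (x - a)) := exp_le_exp.2 (by linarith)
    _ = S a * exp (d * (x - a)) := by rw [exp_add, exp_log (hS a)]

lemma tendsto_revenue_atTop_zero (hS : ∀ x, 0 < S x)
    (hconc : ConcaveOn ℝ univ (fun x => log (S x))) {a d : ℝ}
    (hd : HasDerivAt (fun x => log (S x)) d a) (hd_neg : d < 0) (u : ℝ) :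
    Tendsto (revenue S u) atTop (𝓝 0) := by
  have hdecay : Tendsto (fun v : ℝ => v * exp (d * v)) atTop (𝓝 0) := by
    simpa using tendsto_rpow_mul_exp_neg_mul_atTop_nhds_zero 1 (-d) (neg_pos.2 hd_neg)
  have hbound := hdecay.const_mul (S a * exp (-d * (a + u)))
  rw [mul_zero] at hbound
  refine squeeze_zero' ?_ ?_ hbound
  · filter_upwards [eventually_ge_atTop 0] with v hv
    exact mul_nonneg hv (hS _).le
  · filter_upwards [eventually_ge_atTop 0, eventually_gt_atTop (a + u)] with v hv₀ hv
    calc revenue S u v = v * S (v - u) := rfl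
      _ ≤ v * (S a * exp (d * (v - u - a))) := by
          gcongr
          exact le_mul_exp_of_concaveOn_log hS hconc hd (by linarith)
      _ = S a * exp (-d * (a + u)) * (v * exp (d * v)) := by
          rw [show d * (v - u - a) = -d * (a + u) + d * v by ring, exp_add]
          ring

lemma pos_of_forall_revenue_le (hS : ∀ x, 0 < S x) {u v : ℝ}
    (hv : ∀ w, revenue S u w ≤ revenue S u v) : 0 < v :=
  pos_of_mul_pos_left ((mul_pos one_pos (hS _)).trans_le (hv 1)) (hS _).le

lemma exists_forall_revenue_le (hS : ∀ x, 0 < S x) (hcont : Continuous S) {u : ℝ}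
    (hlim : Tendsto (revenue S u) atTop (𝓝 0)) : ∃ v, ∀ w, revenue S u w ≤ revenue S u v := by
  have hpos : 0 < revenue S u 1 := mul_pos one_pos (hS _)
  refine Continuous.exists_forall_ge' (by unfold revenue; fun_prop) 1 ?_
  rw [cocompact_eq_atBot_atTop, eventually_sup]
  refine ⟨?_, (hlim.eventually (gt_mem_nhds hpos)).mono fun _ h => h.le⟩
  filter_upwards [eventually_lt_atBot 0] with w hw
  exact ((mul_neg_of_neg_of_pos hw (hS _)).trans hpos).le

lemma strictConcaveOn_log_revenue (hS : ∀ x, 0 < S x)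
    (hconc : ConcaveOn ℝ univ (fun x => log (S x))) (u : ℝ) :
    StrictConcaveOn ℝ (Ioi 0) (fun v => log (revenue S u v)) := by
  have hshift : ConcaveOn ℝ (Ioi 0) (fun v => log (S (v - u))) := by
    simpa [Function.comp_def, sub_eq_add_neg] using
      (hconc.translate_left (-u)).subset (subset_univ _) (convex_Ioi 0)
  refine (strictConcaveOn_log_Ioi.add_concaveOn hshift).congr fun v hv => ?_
  exact (log_mul (ne_of_gt hv) (hS _).ne').symm

lemma eq_of_forall_revenue_le (hS : ∀ x, 0 < S x)
    (hconc : ConcaveOn ℝ univ (fun x => log (S x))) {u v w : ℝ}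
    (hv : ∀ x, revenue S u x ≤ revenue S u v) (hw : ∀ x, revenue S u x ≤ revenue S u w) :
    v = w := by
  have hrev_pos : ∀ x : ℝ, 0 < x → 0 < revenue S u x := fun x hx => mul_pos hx (hS _)
  have hlogmax : ∀ y, (∀ x, revenue S u x ≤ revenue S u y) →
      IsMaxOn (fun x => log (revenue S u x)) (Ioi 0) y :=
    fun y hy x hx => log_le_log (hrev_pos x hx) (hy x)
  exact (strictConcaveOn_log_revenue hS hconc u).eq_of_isMaxOn (hlogmax v hv) (hlogmax w hw)
    (pos_of_forall_revenue_le hS hv) (pos_of_forall_revenue_le hS hw)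

end LogConcaveSurvival

theorem stmt_1_general (F : ℝ → ℝ)
    (hf : ∀ ω, 0 < deriv F ω) (hF1 : ∀ ω, F ω < 1)
    (hlc : ∀ ω, deriv (deriv (fun ω => Real.log (1 - F ω))) ω < 0) :
    ∀ u : ℝ, 0 ≤ u →
      ∃! v : ℝ, 0 ≤ v ∧ ∀ w : ℝ, w * (1 - F (w - u)) ≤ v * (1 - F (v - u)) := by
  intro u _
  have hFd : Differentiable ℝ F := fun ω => differentiableAt_of_deriv_ne_zero (hf ω).ne'
  have hS : ∀ ω, 0 < 1 - F ω := fun ω => sub_pos.2 (hF1 ω)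
  have hd : ∀ ω, HasDerivAt (fun ω => log (1 - F ω)) (-deriv F ω / (1 - F ω)) ω := fun ω => by
    simpa using ((hFd ω).hasDerivAt.const_sub 1).log (hS ω).ne'
  have hconc : ConcaveOn ℝ univ (fun ω => log (1 - F ω)) :=
    (strictConcaveOn_univ_of_deriv2_neg (continuous_iff_continuousAt.2 fun ω =>
      (hd ω).continuousAt) hlc).concaveOn
  have hd_neg : -deriv F 0 / (1 - F 0) < 0 := div_neg_of_neg_of_pos (neg_neg_of_pos (hf 0)) (hS 0)
  obtain ⟨v, hv⟩ := exists_forall_revenue_le hS (continuous_const.sub hFd.continuous)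
    (tendsto_revenue_atTop_zero hS hconc (hd 0) hd_neg u)
  exact ⟨v, ⟨(pos_of_forall_revenue_le hS hv).le, hv⟩,
    fun w hw => eq_of_forall_revenue_le hS hconc hw.2 hv⟩

/-- For a C², strictly increasing CDF `F` with positive density,
values strictly between 0 and 1, and `1 - F` strictly log-concave, for every
`u ≥ 0` there is a unique `v* ≥ 0` maximizing `v ↦ v * (1 - F (v - u))` over ℝ. -/
theorem stmt_1 (F : ℝ → ℝ) (hF : ContDiff ℝ 2 F) (hmono : StrictMono F)
    (hf : ∀ ω, 0 < deriv F ω) (hF1 : ∀ ω, F ω < 1)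
    (hlc : ∀ ω, deriv (deriv (fun ω => Real.log (1 - F ω))) ω < 0) :
    ∀ u : ℝ, 0 ≤ u →
      ∃! v : ℝ, 0 ≤ v ∧ ∀ w : ℝ, w * (1 - F (w - u)) ≤ v * (1 - F (v - u)) :=
  stmt_1_general F hf hF1 hlc
end

section
/- Let F be a strictly log-concave, strictly increasing C² CDF with density f, and let J(u) be the unique maximizer of v ↦ v(1−F(v−u)). Then J is differentiable and 0 < J'(u) < 1 for all u ∈ ℝ; consequently J(u) < u + J(0) for all u > 0. -/
/-!
Write `g u = J u - u`. At the maximum the first-order condition `1 - F = J u · f` says exactly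
that `φ (g u) = u`, where `φ ω = (1 - F ω) / f ω - ω`, so `g` is a right inverse of `φ`.
Strict log-concavity of `1 - F` is the inequality `f² + (1 - F) f' > 0`, which gives `φ' < -1`.
By the inverse function theorem `g' = 1 / φ' ∘ g ∈ (-1, 0)`, so `J' = 1 + g' ∈ (0, 1)`, and
`J u - u < J 0` for `u > 0` because `g` is strictly decreasing.
-/

open Real

/-- The paper's `φ`: minus Myerson's virtual value. -/
noncomputable def negVirtualValue (F : ℝ → ℝ) (ω : ℝ) : ℝ := (1 - F ω) / deriv F ω - ω

theorem deriv_deriv_log_one_sub {F : ℝ → ℝ} (hF : Differentiable ℝ F) (hF1 : ∀ ω, F ω < 1)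
    {x : ℝ} (hf : DifferentiableAt ℝ (deriv F) x) :
    deriv (deriv fun ω => log (1 - F ω)) x =
      -(deriv F x ^ 2 + (1 - F x) * deriv (deriv F) x) / (1 - F x) ^ 2 := by
  have hne : ∀ ω, 1 - F ω ≠ 0 := fun ω => by linarith [hF1 ω]
  have hlog : deriv (fun ω => log (1 - F ω)) = fun ω => -deriv F ω / (1 - F ω) :=
    funext fun ω => (((hF ω).hasDerivAt.const_sub 1).log (hne ω)).deriv
  have h : HasDerivAt (fun ω => -deriv F ω / (1 - F ω))
      ((-deriv (deriv F) x * (1 - F x) - -deriv F x * -deriv F x) / (1 - F x) ^ 2) x :=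
    hf.hasDerivAt.neg.div ((hF x).hasDerivAt.const_sub 1) (hne x)
  rw [hlog, h.deriv]
  ring

theorem sq_deriv_add_mul_deriv_deriv_pos {F : ℝ → ℝ} (hF : Differentiable ℝ F)
    (hF1 : ∀ ω, F ω < 1) {x : ℝ} (hf : DifferentiableAt ℝ (deriv F) x)
    (hlc : deriv (deriv fun ω => log (1 - F ω)) x < 0) :
    0 < deriv F x ^ 2 + (1 - F x) * deriv (deriv F) x := by
  rwa [deriv_deriv_log_one_sub hF hF1 hf, neg_div, neg_lt_zero,
    div_pos_iff_of_pos_right (pow_pos (by linarith [hF1 x]) 2)] at hlc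

theorem hasDerivAt_negVirtualValue {F : ℝ → ℝ} {x : ℝ} (hF : DifferentiableAt ℝ F x)
    (hf : DifferentiableAt ℝ (deriv F) x) (hfx : deriv F x ≠ 0) :
    HasDerivAt (negVirtualValue F)
      (-1 - (deriv F x ^ 2 + (1 - F x) * deriv (deriv F) x) / deriv F x ^ 2) x := by
  have h : HasDerivAt (negVirtualValue F)
      ((-deriv F x * deriv F x - (1 - F x) * deriv (deriv F) x) / deriv F x ^ 2 - 1) x :=
    ((hF.hasDerivAt.const_sub 1).div hf.hasDerivAt hfx).sub (hasDerivAt_id' x)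
  exact h.congr_deriv (by ring)

theorem negVirtualValue_sub_eq_of_isLocalMax {F : ℝ → ℝ} {u p : ℝ}
    (hmax : IsLocalMax (fun v => v * (1 - F (v - u))) p) (hF : DifferentiableAt ℝ F (p - u))
    (hfp : deriv F (p - u) ≠ 0) :
    negVirtualValue F (p - u) = u := by
  have hdemand : HasDerivAt (fun v => 1 - F (v - u)) (-deriv F (p - u)) p := by
    simpa using (hF.hasDerivAt.comp p ((hasDerivAt_id p).sub_const u)).const_sub 1
  have hfoc := hmax.hasDerivAt_eq_zero ((hasDerivAt_id' p).mul hdemand)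
  have hprice : 1 - F (p - u) = p * deriv F (p - u) := by linarith
  rw [negVirtualValue, hprice]
  field_simp
  ring

theorem Function.RightInverse.strictAnti {α β : Type*} [LinearOrder α] [Preorder β]
    {φ : α → β} {g : β → α} (hφ : StrictAnti φ)
    (hg : Function.RightInverse g φ) : StrictAnti g :=
  fun a b hab => hφ.lt_iff_gt.mp (by rwa [hg a, hg b])

theorem Function.RightInverse.hasDerivAt_of_deriv_neg {φ φ' g : ℝ → ℝ}
    (hφ : ∀ x, HasDerivAt φ (φ' x) x) (hφ' : ∀ x, φ' x < 0)
    (hg : Function.RightInverse g φ) (u : ℝ) :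
    HasDerivAt g (φ' (g u))⁻¹ u := by
  have hanti : StrictAnti g := hg.strictAnti (strictAnti_of_hasDerivAt_neg hφ hφ')
  have hsurj : Function.Surjective g :=
    fun x => ⟨φ x, (strictAnti_of_hasDerivAt_neg hφ hφ').injective (hg (φ x))⟩
  have hcont : Continuous g :=
    continuous_ofDual.comp (hanti.antitone.dual_right.continuous_of_surjective hsurj)
  exact HasDerivAt.of_local_left_inverse hcont.continuousAt (hφ (g u)) (hφ' (g u)).ne
    (Filter.Eventually.of_forall hg)

theorem stmt_2_general (F : ℝ → ℝ) (hF : ContDiff ℝ 2 F)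
    (hf : ∀ ω, 0 < deriv F ω) (hF1 : ∀ ω, F ω < 1)
    (hlc : ∀ ω, deriv (deriv (fun ω => Real.log (1 - F ω))) ω < 0)
    (J : ℝ → ℝ)
    (hJmax : ∀ u v : ℝ, v * (1 - F (v - u)) ≤ J u * (1 - F (J u - u))) :
    Differentiable ℝ J ∧ (∀ u : ℝ, 0 < deriv J u ∧ deriv J u < 1) ∧
      (∀ u : ℝ, 0 < u → J u < u + J 0) := by
  obtain ⟨hFd, -, hf2⟩ := contDiff_succ_iff_deriv.mp (show ContDiff ℝ (1 + 1) F from hF)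
  have hfd : Differentiable ℝ (deriv F) := hf2.differentiable one_ne_zero
  set φ' : ℝ → ℝ := fun x =>
    -1 - (deriv F x ^ 2 + (1 - F x) * deriv (deriv F) x) / deriv F x ^ 2
  have hφ (x : ℝ) : HasDerivAt (negVirtualValue F) (φ' x) x :=
    hasDerivAt_negVirtualValue (hFd x) (hfd x) (hf x).ne'
  have hφ' (x : ℝ) : φ' x < -1 := by
    have := div_pos (sq_deriv_add_mul_deriv_deriv_pos hFd hF1 (hfd x) (hlc x)) (pow_pos (hf x) 2)
    simp only [φ']
    linarith
  have hφneg (x : ℝ) : φ' x < 0 := (hφ' x).trans (by norm_num)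
  have hg : Function.RightInverse (fun u => J u - u) (negVirtualValue F) := fun u =>
    negVirtualValue_sub_eq_of_isLocalMax (Filter.Eventually.of_forall (hJmax u)) (hFd _)
      (hf _).ne'
  have hJ (u : ℝ) : HasDerivAt J ((φ' (J u - u))⁻¹ + 1) u := by
    have h := (hg.hasDerivAt_of_deriv_neg hφ hφneg u).add (hasDerivAt_id' u)
    rwa [show ((fun v => J v - v) + fun v => v) = J from funext fun v => sub_add_cancel _ _] at h
  refine ⟨fun u => (hJ u).differentiableAt, fun u => ?_, fun u hu => ?_⟩
  · have hinv : -1 < (φ' (J u - u))⁻¹ :=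
      (lt_inv_of_neg (by norm_num) (hφneg _)).mpr (by simpa using hφ' (J u - u))
    rw [(hJ u).deriv]
    constructor <;> linarith [inv_lt_zero.mpr (hφneg (J u - u))]
  · have := hg.strictAnti (strictAnti_of_hasDerivAt_neg hφ hφneg) hu
    linarith

/-- For a strictly log-concave, strictly increasing C² CDF `F`,
if `J u` is the unique maximizer of `v ↦ v * (1 - F (v - u))`, then `J` is
differentiable with `0 < J' < 1` everywhere, and `J u < u + J 0` for `u > 0`. -/
theorem stmt_2 (F : ℝ → ℝ) (hF : ContDiff ℝ 2 F) (hmono : StrictMono F)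
    (hf : ∀ ω, 0 < deriv F ω) (hF1 : ∀ ω, F ω < 1)
    (hlc : ∀ ω, deriv (deriv (fun ω => Real.log (1 - F ω))) ω < 0)
    (J : ℝ → ℝ)
    (hJmax : ∀ u v : ℝ, v * (1 - F (v - u)) ≤ J u * (1 - F (J u - u)))
    (hJuniq : ∀ u v : ℝ,
      (∀ w : ℝ, w * (1 - F (w - u)) ≤ v * (1 - F (v - u))) → v = J u) :
    Differentiable ℝ J ∧ (∀ u : ℝ, 0 < deriv J u ∧ deriv J u < 1) ∧
      (∀ u : ℝ, 0 < u → J u < u + J 0) :=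
  stmt_2_general F hF hf hF1 hlc J hJmax
end

section
/- With the same negative log-likelihood l(θ) = −𝟙·log(1−F(v−xᵀθ)) − (1−𝟙)·log(F(v−xᵀθ)), the gradient satisfies ∇l(θ)∇l(θ)ᵀ ⪯ C_exp · x xᵀ, where C_exp = sup_{ω∈[−B,B+J(0)]} max{ f(ω)²/F(ω)², f(ω)²/(1−F(ω))² } < ∞. Consequently l is (C_down/C_exp)-exponentially concave: ∇²l(θ) ⪰ (C_down/C_exp) ∇l(θ)∇l(θ)ᵀ. -/
/-!
Along a line `θ + t • h` the loss is `G (c - ⟪x, h⟫ * t)` with `c = v - ⟪x, θ⟫` and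
`G = -log F` (if `ind = 0`) or `G = -log (1 - F)` (if `ind = 1`). Hence the first directional
derivative is `-⟪x, h⟫ G'(c)` and the second is `⟪x, h⟫² G''(c)`. Since `G'² = f²/F²` resp.
`f²/(1-F)²`, the first is bounded by `C_exp ⟪x, h⟫²`; since `G'' ≥ C_down ≥ 0` on the interval,
`(C_down / C_exp) ⟪x, h⟫² G'(c)² ≤ C_down ⟪x, h⟫² ≤ ⟪x, h⟫² G''(c)`.
-/

open scoped RealInnerProductSpace
open Set

section DerivCompAffine

variable {𝕜 E : Type*} [NontriviallyNormedField 𝕜] [NormedAddCommGroup E] [NormedSpace 𝕜 E]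

theorem deriv_comp_const_sub_mul (G : 𝕜 → E) (c a : 𝕜) :
    deriv (fun t => G (c - a * t)) = fun t => -a • deriv G (c - a * t) := by
  funext t
  rw [deriv_comp_mul_left a (fun s => G (c - s)) t, deriv_comp_const_sub, smul_neg, neg_smul]

theorem deriv_deriv_comp_const_sub_mul (G : 𝕜 → E) (c a : 𝕜) :
    deriv (deriv fun t => G (c - a * t)) = fun t => a ^ 2 • deriv (deriv G) (c - a * t) := by
  funext t
  rw [deriv_comp_const_sub_mul, deriv_fun_const_smul_field, deriv_comp_const_sub_mul, smul_smul]
  ring_nf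

theorem deriv_deriv_neg (g : 𝕜 → E) (ω : 𝕜) :
    deriv (deriv fun y => -g y) ω = -deriv (deriv g) ω := by
  simp only [deriv.fun_neg', deriv.fun_neg]

end DerivCompAffine

theorem sq_deriv_neg_log {g : ℝ → ℝ} {ω : ℝ} (hg : DifferentiableAt ℝ g ω) (hg0 : g ω ≠ 0) :
    deriv (fun y => -Real.log (g y)) ω ^ 2 = deriv g ω ^ 2 / g ω ^ 2 := by
  rw [deriv.fun_neg, deriv.log hg hg0, neg_sq, div_pow]

theorem div_mul_sq_le {D E a b : ℝ} (hD : 0 ≤ D) (hE : a ^ 2 ≤ E) (hb : D ≤ b) :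
    D / E * a ^ 2 ≤ b := by
  rw [div_mul_eq_mul_div]
  exact (div_le_of_le_mul₀ ((sq_nonneg a).trans hE) hD (by gcongr)).trans hb

section LineRestriction

variable {G : ℝ → ℝ} {c a : ℝ}

theorem sq_deriv_comp_const_sub_mul_le {E : ℝ} (hE : deriv G c ^ 2 ≤ E) :
    deriv (fun t => G (c - a * t)) 0 ^ 2 ≤ E * a ^ 2 := by
  rw [deriv_comp_const_sub_mul]
  simp only [mul_zero, sub_zero, smul_eq_mul, mul_pow, neg_sq]
  rw [mul_comm]
  exact mul_le_mul_of_nonneg_right hE (sq_nonneg a)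

theorem div_mul_sq_deriv_comp_const_sub_mul_le {D E : ℝ} (hD : 0 ≤ D) (hE : deriv G c ^ 2 ≤ E)
    (hDG : D ≤ deriv (deriv G) c) :
    D / E * deriv (fun t => G (c - a * t)) 0 ^ 2 ≤ deriv (deriv fun t => G (c - a * t)) 0 := by
  rw [deriv_deriv_comp_const_sub_mul, deriv_comp_const_sub_mul]
  simp only [mul_zero, sub_zero, smul_eq_mul, mul_pow, neg_sq]
  rw [mul_left_comm]
  exact mul_le_mul_of_nonneg_left (div_mul_sq_le hD hE hDG) (sq_nonneg a)

end LineRestriction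

theorem continuous_max_sq_deriv_div {F : ℝ → ℝ} (hF : ContDiff ℝ 1 F)
    (hF01 : ∀ ω, 0 < F ω ∧ F ω < 1) :
    Continuous fun ω => max (deriv F ω ^ 2 / F ω ^ 2) (deriv F ω ^ 2 / (1 - F ω) ^ 2) := by
  have hf := hF.continuous_deriv le_rfl
  exact .max ((hf.pow 2).div (hF.continuous.pow 2) fun ω => pow_ne_zero 2 (hF01 ω).1.ne')
    ((hf.pow 2).div ((continuous_const.sub hF.continuous).pow 2) fun ω =>
      pow_ne_zero 2 (sub_pos.2 (hF01 ω).2).ne')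

theorem stmt_5_general (d : ℕ) (F : ℝ → ℝ) (hF : ContDiff ℝ 2 F)
    (hF01 : ∀ ω, 0 < F ω ∧ F ω < 1)
    (hlcF : ∀ ω, deriv (deriv (fun ω => Real.log (F ω))) ω < 0)
    (hlc1F : ∀ ω, deriv (deriv (fun ω => Real.log (1 - F ω))) ω < 0)
    (x : EuclideanSpace ℝ (Fin d)) (v : ℝ) (ind : ℝ) (hind : ind = 0 ∨ ind = 1)
    (B J0 : ℝ)
    (l : EuclideanSpace ℝ (Fin d) → ℝ)
    (hl : l = fun θ => -ind * Real.log (1 - F (v - ⟪x, θ⟫)) -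
      (1 - ind) * Real.log (F (v - ⟪x, θ⟫)))
    (Cdown : ℝ)
    (hCdown : Cdown = sInf ((fun ω =>
        min (deriv (deriv (fun ω => -Real.log (1 - F ω))) ω)
            (deriv (deriv (fun ω => -Real.log (F ω))) ω)) ''
      Set.Icc (-B) (B + J0)))
    (Cexp : ℝ)
    (hCexp : Cexp = sSup ((fun ω =>
        max ((deriv F ω) ^ 2 / (F ω) ^ 2)
            ((deriv F ω) ^ 2 / (1 - F ω) ^ 2)) '' Set.Icc (-B) (B + J0))) :
    (∀ θ : EuclideanSpace ℝ (Fin d), v - ⟪x, θ⟫ ∈ Set.Icc (-B) (B + J0) →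
      ∀ h : EuclideanSpace ℝ (Fin d),
        (deriv (fun t : ℝ => l (θ + t • h)) 0) ^ 2 ≤ Cexp * ⟪x, h⟫ ^ 2) ∧
    (∀ θ : EuclideanSpace ℝ (Fin d), v - ⟪x, θ⟫ ∈ Set.Icc (-B) (B + J0) →
      ∀ h : EuclideanSpace ℝ (Fin d),
        (Cdown / Cexp) * (deriv (fun t : ℝ => l (θ + t • h)) 0) ^ 2 ≤
          deriv (deriv (fun t : ℝ => l (θ + t • h))) 0) := by
  have hFd : Differentiable ℝ F := hF.differentiable (by norm_num)
  have hmax := continuous_max_sq_deriv_div (hF.of_le one_le_two) hF01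
  have hconvex : ∀ ω, 0 ≤ min (deriv (deriv fun ω => -Real.log (1 - F ω)) ω)
      (deriv (deriv fun ω => -Real.log (F ω)) ω) := fun ω => by
    rw [deriv_deriv_neg, deriv_deriv_neg]
    exact le_min (neg_nonneg.2 (hlc1F ω).le) (neg_nonneg.2 (hlcF ω).le)
  have hmin_nonneg : ∀ y ∈ _ '' Icc (-B) (B + J0), (0 : ℝ) ≤ y :=
    forall_mem_image.2 fun ω _ => hconvex ω
  have hCdown0 : 0 ≤ Cdown := hCdown ▸ Real.sInf_nonneg hmin_nonneg
  have hline : ∀ θ, v - ⟪x, θ⟫ ∈ Icc (-B) (B + J0) → ∀ h, ∃ G : ℝ → ℝ,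
      (fun t : ℝ => l (θ + t • h)) = (fun t => G (v - ⟪x, θ⟫ - ⟪x, h⟫ * t)) ∧
      deriv G (v - ⟪x, θ⟫) ^ 2 ≤ Cexp ∧ Cdown ≤ deriv (deriv G) (v - ⟪x, θ⟫) := by
    intro θ hθ h
    have harg : ∀ t : ℝ, v - ⟪x, θ + t • h⟫ = v - ⟪x, θ⟫ - ⟪x, h⟫ * t := fun t => by
      rw [inner_add_right, real_inner_smul_right]; ring
    have hCexp_le := hCexp ▸ hmax.continuousOn.le_sSup_image_Icc hθ
    have hCdown_le := hCdown ▸ csInf_le ⟨0, fun _ hy => hmin_nonneg _ hy⟩ (mem_image_of_mem _ hθ)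
    rcases hind with rfl | rfl
    · refine ⟨fun ω => -Real.log (F ω), ?_, ?_, hCdown_le.trans (min_le_right _ _)⟩
      · funext t; simp [hl, harg]
      · rw [sq_deriv_neg_log (hFd _) (hF01 _).1.ne']
        exact (le_max_left _ _).trans hCexp_le
    · refine ⟨fun ω => -Real.log (1 - F ω), ?_, ?_, hCdown_le.trans (min_le_left _ _)⟩
      · funext t; simp [hl, harg]
      · rw [sq_deriv_neg_log ((hFd _).const_sub 1) (sub_pos.2 (hF01 _).2).ne', deriv_const_sub,
          neg_sq]
        exact (le_max_right _ _).trans hCexp_le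
  refine ⟨fun θ hθ h => ?_, fun θ hθ h => ?_⟩
  · obtain ⟨G, hG, hG', _⟩ := hline θ hθ h
    rw [hG]
    exact sq_deriv_comp_const_sub_mul_le hG'
  · obtain ⟨G, hG, hG', hG''⟩ := hline θ hθ h
    rw [hG]
    exact div_mul_sq_deriv_comp_const_sub_mul_le hCdown0 hG' hG''

/-- Gradient bound and exponential concavity of the negative
log-likelihood. With `l` as before, `∇l ∇lᵀ ⪯ C_exp • x xᵀ` (expressed via
first directional derivatives), where `C_exp` is the supremum over the
compact interval of `max (f/F)² ((f/(1-F))²)`, which is finite; consequently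
`l` is `(C_down / C_exp)`-exponentially concave:
`∇²l ⪰ (C_down / C_exp) ∇l ∇lᵀ`. -/
theorem stmt_5 (d : ℕ) (F : ℝ → ℝ) (hF : ContDiff ℝ 2 F) (hmono : StrictMono F)
    (hf : ∀ ω, 0 < deriv F ω) (hF01 : ∀ ω, 0 < F ω ∧ F ω < 1)
    (hlcF : ∀ ω, deriv (deriv (fun ω => Real.log (F ω))) ω < 0)
    (hlc1F : ∀ ω, deriv (deriv (fun ω => Real.log (1 - F ω))) ω < 0)
    (x : EuclideanSpace ℝ (Fin d)) (v : ℝ) (ind : ℝ) (hind : ind = 0 ∨ ind = 1)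
    (B J0 : ℝ) (hB : 0 < B)
    (l : EuclideanSpace ℝ (Fin d) → ℝ)
    (hl : l = fun θ => -ind * Real.log (1 - F (v - ⟪x, θ⟫)) -
      (1 - ind) * Real.log (F (v - ⟪x, θ⟫)))
    (Cdown : ℝ)
    (hCdown : Cdown = sInf ((fun ω =>
        min (deriv (deriv (fun ω => -Real.log (1 - F ω))) ω)
            (deriv (deriv (fun ω => -Real.log (F ω))) ω)) ''
      Set.Icc (-B) (B + J0)))
    (Cexp : ℝ)
    (hCexp : Cexp = sSup ((fun ω =>
        max ((deriv F ω) ^ 2 / (F ω) ^ 2)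
            ((deriv F ω) ^ 2 / (1 - F ω) ^ 2)) '' Set.Icc (-B) (B + J0))) :
    (∀ θ : EuclideanSpace ℝ (Fin d), v - ⟪x, θ⟫ ∈ Set.Icc (-B) (B + J0) →
      ∀ h : EuclideanSpace ℝ (Fin d),
        (deriv (fun t : ℝ => l (θ + t • h)) 0) ^ 2 ≤ Cexp * ⟪x, h⟫ ^ 2) ∧
    (∀ θ : EuclideanSpace ℝ (Fin d), v - ⟪x, θ⟫ ∈ Set.Icc (-B) (B + J0) →
      ∀ h : EuclideanSpace ℝ (Fin d),
        (Cdown / Cexp) * (deriv (fun t : ℝ => l (θ + t • h)) 0) ^ 2 ≤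
          deriv (deriv (fun t : ℝ => l (θ + t • h))) 0) :=
  stmt_5_general d F hF hF01 hlcF hlc1F x v ind hind B J0 l hl Cdown hCdown Cexp hCexp
end

section
/- Let Q₀ and Q₁ be two probability distributions on a finite space Y with Q₀(y) > 0 and Q₁(y) > 0 for all y ∈ Y. Then for any function F: Y → {0,1}, Q₀({F = 1}) + Q₁({F = 0}) ≥ (1/2)·exp(−KL(Q₀ ‖ Q₁)). -/
/-!
Bretagnolle–Huber: by Jensen's inequality for `exp`,
`exp (-KL/2) ≤ ∑ √(Q₀ Q₁)`, and by Cauchy–Schwarz applied to `√(Q₀ Q₁) = √(min) √(max)`,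
`(∑ √(Q₀ Q₁))² ≤ (∑ min (Q₀, Q₁)) (∑ max (Q₀, Q₁)) ≤ 2 ∑ min (Q₀, Q₁)`.
Finally any test `F` pays at least `min (Q₀ y, Q₁ y)` at every point `y`.
-/

open Finset

section

open Real

variable {ι : Type*} [Fintype ι]

lemma sum_min_le_sum_filter_add_sum_filter (p q : ι → ℝ) (F : ι → Bool) :
    ∑ i, min (p i) (q i) ≤
      (∑ i ∈ univ.filter (fun i => F i = true), p i) +
      (∑ i ∈ univ.filter (fun i => F i = false), q i) := by
  rw [← sum_filter_add_sum_filter_not univ (fun i => F i = true)]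
  simp only [Bool.not_eq_true]
  gcongr with i _ i _
  · exact min_le_left _ _
  · exact min_le_right _ _

lemma mul_sqrt_div_self {a : ℝ} (ha : 0 < a) (b : ℝ) : a * √(b / a) = √(a * b) := by
  nth_rewrite 1 [← sqrt_sq ha.le]
  rw [← sqrt_mul (sq_nonneg a)]
  congr 1
  field_simp

lemma exp_neg_half_sum_mul_log_div_le_sum_sqrt_mul {p q : ι → ℝ} (hp : ∀ i, 0 < p i)
    (hq : ∀ i, 0 < q i) (hp_sum : ∑ i, p i = 1) :
    exp (-(∑ i, p i * log (p i / q i)) / 2) ≤ ∑ i, √(p i * q i) := by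
  have jensen := convexOn_exp.map_sum_le (t := univ) (w := p)
    (p := fun i => log (q i / p i) / 2) (fun i _ => (hp i).le) hp_sum (fun i _ => Set.mem_univ _)
  have hneg : -(∑ i, p i * log (p i / q i)) / 2 = ∑ i, p i * (log (q i / p i) / 2) := by
    rw [neg_div, sum_div, ← sum_neg_distrib]
    refine sum_congr rfl fun i _ => ?_
    rw [log_div (hp i).ne' (hq i).ne', log_div (hq i).ne' (hp i).ne']
    ring
  rw [hneg]
  refine jensen.trans_eq (sum_congr rfl fun i _ => ?_)
  rw [smul_eq_mul, exp_half, exp_log (div_pos (hq i) (hp i)), mul_sqrt_div_self (hp i)]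

lemma sq_sum_sqrt_mul_le_sum_min_mul_sum_max {p q : ι → ℝ} (hp : ∀ i, 0 ≤ p i)
    (hq : ∀ i, 0 ≤ q i) :
    (∑ i, √(p i * q i)) ^ 2 ≤ (∑ i, min (p i) (q i)) * ∑ i, max (p i) (q i) := by
  have hmin : ∀ i, 0 ≤ min (p i) (q i) := fun i => le_min (hp i) (hq i)
  have hmax : ∀ i, 0 ≤ max (p i) (q i) := fun i => (hp i).trans (le_max_left _ _)
  have cs := sum_sqrt_mul_sqrt_le univ hmin hmax
  simp only [← sqrt_mul (hmin _), min_mul_max] at cs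
  calc (∑ i, √(p i * q i)) ^ 2
      ≤ (√(∑ i, min (p i) (q i)) * √(∑ i, max (p i) (q i))) ^ 2 := by
        gcongr
    _ = _ := by
        rw [mul_pow, sq_sqrt (sum_nonneg fun i _ => hmin i), sq_sqrt (sum_nonneg fun i _ => hmax i)]

lemma sum_max_le_sum_add_sum {p q : ι → ℝ} (hp : ∀ i, 0 ≤ p i) (hq : ∀ i, 0 ≤ q i) :
    ∑ i, max (p i) (q i) ≤ ∑ i, p i + ∑ i, q i := by
  rw [← sum_add_distrib]
  gcongr with i
  exact max_le (le_add_of_nonneg_right (hq i)) (le_add_of_nonneg_left (hp i))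

lemma exp_neg_sum_mul_log_div_le_two_mul_sum_min {p q : ι → ℝ} (hp : ∀ i, 0 < p i)
    (hq : ∀ i, 0 < q i) (hp_sum : ∑ i, p i = 1) (hq_sum : ∑ i, q i = 1) :
    exp (-(∑ i, p i * log (p i / q i))) ≤ 2 * ∑ i, min (p i) (q i) := by
  have hp' : ∀ i, 0 ≤ p i := fun i => (hp i).le
  have hq' : ∀ i, 0 ≤ q i := fun i => (hq i).le
  have hmin : 0 ≤ ∑ i, min (p i) (q i) := sum_nonneg fun i _ => le_min (hp' i) (hq' i)
  calc exp (-(∑ i, p i * log (p i / q i)))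
      = exp (-(∑ i, p i * log (p i / q i)) / 2) ^ 2 := by rw [exp_half, sq_sqrt (exp_pos _).le]
    _ ≤ (∑ i, √(p i * q i)) ^ 2 := by
        gcongr
        exact exp_neg_half_sum_mul_log_div_le_sum_sqrt_mul hp hq hp_sum
    _ ≤ (∑ i, min (p i) (q i)) * ∑ i, max (p i) (q i) :=
        sq_sum_sqrt_mul_le_sum_min_mul_sum_max hp' hq'
    _ ≤ (∑ i, min (p i) (q i)) * 2 := by
        gcongr
        simpa [hp_sum, hq_sum, one_add_one_eq_two] using sum_max_le_sum_add_sum hp' hq'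
    _ = 2 * ∑ i, min (p i) (q i) := mul_comm _ _

end

/-- For probability distributions `Q₀, Q₁` on a finite space `Y`,
both everywhere positive, and any `F : Y → {0,1}` (as `Bool`),
`Q₀({F = 1}) + Q₁({F = 0}) ≥ (1/2) exp (-KL(Q₀‖Q₁))`. -/
theorem stmt_8 (Y : Type*) [Fintype Y] (Q₀ Q₁ : Y → ℝ)
    (hQ₀pos : ∀ y, 0 < Q₀ y) (hQ₁pos : ∀ y, 0 < Q₁ y)
    (hQ₀sum : ∑ y, Q₀ y = 1) (hQ₁sum : ∑ y, Q₁ y = 1)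
    (F : Y → Bool) :
    (1 / 2) * Real.exp (-(∑ y, Q₀ y * Real.log (Q₀ y / Q₁ y))) ≤
      (∑ y ∈ univ.filter (fun y => F y = true), Q₀ y) +
      (∑ y ∈ univ.filter (fun y => F y = false), Q₁ y) := by
  have hBH := exp_neg_sum_mul_log_div_le_two_mul_sum_min hQ₀pos hQ₁pos hQ₀sum hQ₁sum
  have htest := sum_min_le_sum_filter_add_sum_filter Q₀ Q₁ F
  linarith
end

section
/- Let Φ be the standard Gaussian CDF and J₁(u) = argmax_v v·Φ(u−v). Then u* := √(π/2) is the unique fixed point of J₁, and for any σ ∈ (1/2, 1), J_σ(u*) < u*. -/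
noncomputable def gaussPDF (ω : ℝ) : ℝ :=
  (Real.sqrt (2 * Real.pi))⁻¹ * Real.exp (-ω ^ 2 / 2)

noncomputable def gaussCDF (ω : ℝ) : ℝ := ∫ t in Set.Iic ω, gaussPDF t

/-!
The maximiser `v = J σ u` of `v ↦ v Φ((u - v)/σ)` satisfies the first-order condition
`Φ((u - v)/σ) = (v/σ) φ((u - v)/σ)`. For `σ = 1` and a fixed point `v = u` it reads
`1/2 = u φ(0)`, so `u = √(π/2)`.

Everything else rests on the tail bound `Φ(-x) ≤ (√(π/2) + x) φ(x)` for `x ≥ 0`, an equality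
at `x = 0`. For `x ≥ 1/√(π/2)` it follows from the Mills ratio bound `Φ(-x) ≤ φ(x)/x`; below
that point the difference of the two sides vanishes at `0` and has derivative
`φ(x)(2 - √(π/2) x - x²) ≥ 0`. The tail bound makes `v Φ(√(π/2) - v)` nonincreasing on
`[√(π/2), ∞)`, while `Φ(t) ≤ 1/2 + φ(0) t` handles `v ≤ √(π/2)`, so `√(π/2)` is the maximiser
for `σ = 1`. For `σ < 1` the first-order condition at some `v ≥ √(π/2)`, written with
`x = (v - √(π/2))/σ`, would say `Φ(-x) = (√(π/2)/σ + x) φ(x)`, which the tail bound rules out.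
-/

open Real MeasureTheory Set Filter Topology ProbabilityTheory

lemma gaussPDF_eq_gaussianPDFReal : gaussPDF = gaussianPDFReal 0 1 := by
  ext x
  simp [gaussPDF, gaussianPDFReal]

lemma gaussPDF_pos (x : ℝ) : 0 < gaussPDF x := by
  rw [gaussPDF_eq_gaussianPDFReal]
  exact gaussianPDFReal_pos _ _ _ one_ne_zero

lemma gaussPDF_neg (x : ℝ) : gaussPDF (-x) = gaussPDF x := by
  simp [gaussPDF]

lemma gaussPDF_le_gaussPDF_zero (x : ℝ) : gaussPDF x ≤ gaussPDF 0 := by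
  simp only [gaussPDF]
  gcongr _ * exp ?_
  nlinarith [sq_nonneg x]

lemma continuous_gaussPDF : Continuous gaussPDF := by
  unfold gaussPDF
  fun_prop

lemma integrable_gaussPDF : Integrable gaussPDF :=
  gaussPDF_eq_gaussianPDFReal ▸ integrable_gaussianPDFReal 0 1

lemma integral_gaussPDF : ∫ x, gaussPDF x = 1 := by
  rw [gaussPDF_eq_gaussianPDFReal]
  exact integral_gaussianPDFReal_eq_one 0 one_ne_zero

lemma hasDerivAt_gaussPDF (x : ℝ) : HasDerivAt gaussPDF (-x * gaussPDF x) x := by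
  have h : HasDerivAt (fun y : ℝ => -y ^ 2 / 2) (-x) x :=
    ((hasDerivAt_pow 2 x).fun_neg.div_const 2).congr_deriv (by ring)
  exact (h.exp.const_mul _).congr_deriv (by simp only [gaussPDF]; ring)

lemma integrable_neg_mul_gaussPDF : Integrable fun x => -x * gaussPDF x := by
  refine ((integrable_mul_exp_neg_mul_sq (b := 1 / 2) (by norm_num)).const_mul
    (-(√(2 * π))⁻¹)).congr (Eventually.of_forall fun x => ?_)
  simp only [gaussPDF]
  ring_nf

lemma tendsto_gaussPDF_atBot : Tendsto gaussPDF atBot (𝓝 0) :=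
  tendsto_zero_of_hasDerivAt_of_integrableOn_Iic (a := 0) (fun x _ => hasDerivAt_gaussPDF x)
    integrable_neg_mul_gaussPDF.integrableOn integrable_gaussPDF.integrableOn

lemma gaussCDF_nonneg (x : ℝ) : 0 ≤ gaussCDF x :=
  setIntegral_nonneg measurableSet_Iic fun t _ => (gaussPDF_pos t).le

lemma gaussCDF_zero : gaussCDF 0 = 1 / 2 := by
  have hsymm : ∫ t in Ioi 0, gaussPDF t = gaussCDF 0 := by
    rw [gaussCDF, ← neg_zero, ← integral_comp_neg_Ioi]
    simp only [gaussPDF_neg, neg_zero]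
  have htotal := intervalIntegral.integral_Iic_add_Ioi (b := 0) (μ := volume)
    integrable_gaussPDF.integrableOn integrable_gaussPDF.integrableOn
  rw [hsymm, integral_gaussPDF] at htotal
  change gaussCDF 0 + gaussCDF 0 = 1 at htotal
  linarith

lemma gaussCDF_sub_gaussCDF (a b : ℝ) : gaussCDF b - gaussCDF a = ∫ t in a..b, gaussPDF t :=
  intervalIntegral.integral_Iic_sub_Iic integrable_gaussPDF.integrableOn
    integrable_gaussPDF.integrableOn

lemma hasDerivAt_gaussCDF (x : ℝ) : HasDerivAt gaussCDF (gaussPDF x) x := by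
  have h : gaussCDF = fun y => gaussCDF 0 + ∫ t in 0..y, gaussPDF t := by
    ext y
    rw [← gaussCDF_sub_gaussCDF]
    ring
  rw [h]
  exact (continuous_gaussPDF.integral_hasStrictDerivAt 0 x).hasDerivAt.const_add _

lemma gaussCDF_le_half_add {x : ℝ} (hx : 0 ≤ x) : gaussCDF x ≤ 1 / 2 + gaussPDF 0 * x := by
  have h := intervalIntegral.integral_mono_on hx (continuous_gaussPDF.intervalIntegrable 0 x)
    (intervalIntegrable_const (μ := volume)) fun t _ => gaussPDF_le_gaussPDF_zero t
  rw [← gaussCDF_sub_gaussCDF, intervalIntegral.integral_const, gaussCDF_zero] at h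
  simp only [sub_zero, smul_eq_mul] at h
  linarith

lemma gaussCDF_neg_le_gaussPDF_div {x : ℝ} (hx : 0 < x) : gaussCDF (-x) ≤ gaussPDF x / x := by
  have hmoment : ∫ t in Iic (-x), -t * gaussPDF t = gaussPDF x := by
    rw [integral_Iic_of_hasDerivAt_of_tendsto' (fun t _ => hasDerivAt_gaussPDF t)
      integrable_neg_mul_gaussPDF.integrableOn tendsto_gaussPDF_atBot, sub_zero, gaussPDF_neg]
  rw [← hmoment, ← integral_div, gaussCDF]
  refine setIntegral_mono_on integrable_gaussPDF.integrableOn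
    (integrable_neg_mul_gaussPDF.div_const x).integrableOn measurableSet_Iic fun t ht => ?_
  have htx : t ≤ -x := ht
  rw [le_div_iff₀ hx]
  nlinarith [gaussPDF_pos t]

lemma sqrt_pi_div_two_mul_gaussPDF_zero : √(π / 2) * gaussPDF 0 = 1 / 2 := by
  have h : √(2 * π) = 2 * √(π / 2) := by
    rw [show 2 * π = 2 ^ 2 * (π / 2) by ring, sqrt_mul (by norm_num), sqrt_sq (by norm_num)]
  have : 0 < √(π / 2) := by positivity
  simp only [gaussPDF, h]
  field_simp
  simp

lemma eq_sqrt_pi_div_two_of_mul_gaussPDF_zero {u : ℝ} (hu : u * gaussPDF 0 = 1 / 2) :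
    u = √(π / 2) :=
  mul_right_cancel₀ (gaussPDF_pos 0).ne' (hu.trans sqrt_pi_div_two_mul_gaussPDF_zero.symm)

lemma gaussCDF_neg_le_mul_gaussPDF {x : ℝ} (hx : 0 ≤ x) :
    gaussCDF (-x) ≤ (√(π / 2) + x) * gaussPDF x := by
  set u := √(π / 2) with hu_def
  have hu : 0 < u := by positivity
  rcases le_total x u⁻¹ with hxu | hxu
  · have hderiv : ∀ y, HasDerivAt (fun y => (u + y) * gaussPDF y - gaussCDF (-y))
        (gaussPDF y * (2 - u * y - y ^ 2)) y := fun y => by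
      have h := (((hasDerivAt_id y).const_add u).mul (hasDerivAt_gaussPDF y)).sub
        ((hasDerivAt_gaussCDF (-y)).comp y (hasDerivAt_neg y))
      refine h.congr_deriv ?_
      simp only [id, gaussPDF_neg]
      ring
    have hmono : MonotoneOn (fun y => (u + y) * gaussPDF y - gaussCDF (-y)) (Icc 0 u⁻¹) := by
      refine monotoneOn_of_hasDerivWithinAt_nonneg (convex_Icc 0 u⁻¹)
        (HasDerivAt.continuousOn fun y _ => hderiv y) (fun y _ => (hderiv y).hasDerivWithinAt)
        fun y hy => ?_
      rw [interior_Icc] at hy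
      have huy : u * y ≤ 1 := by
        simpa [hu.ne'] using mul_le_mul_of_nonneg_left hy.2.le hu.le
      have hy_sq : y ^ 2 < 1 := by
        have hu_sq : u ^ 2 = π / 2 := sq_sqrt (by positivity)
        have : (u * y) ^ 2 ≤ 1 := pow_le_one₀ (mul_pos hu hy.1).le huy
        nlinarith [pi_gt_three]
      exact mul_nonneg (gaussPDF_pos y).le (by linarith)
    have := hmono ⟨le_rfl, by positivity⟩ ⟨hx, hxu⟩ hx
    simp only [add_zero, neg_zero, gaussCDF_zero, hu_def,
      sqrt_pi_div_two_mul_gaussPDF_zero] at this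
    linarith
  · have hx0 : 0 < x := lt_of_lt_of_le (by positivity) hxu
    calc gaussCDF (-x) ≤ gaussPDF x / x := gaussCDF_neg_le_gaussPDF_div hx0
      _ = x⁻¹ * gaussPDF x := div_eq_inv_mul _ _
      _ ≤ (u + x) * gaussPDF x :=
        mul_le_mul_of_nonneg_right (by linarith [inv_le_of_inv_le₀ hu hxu]) (gaussPDF_pos x).le

lemma hasDerivAt_mul_gaussCDF (u σ v : ℝ) :
    HasDerivAt (fun w => w * gaussCDF ((u - w) / σ))
      (gaussCDF ((u - v) / σ) - v / σ * gaussPDF ((u - v) / σ)) v := by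
  have h := (hasDerivAt_id v).mul
    ((hasDerivAt_gaussCDF _).comp v (((hasDerivAt_id v).const_sub u).div_const σ))
  refine h.congr_deriv ?_
  simp only [id, Function.comp_def]
  ring

lemma gaussCDF_eq_of_isMaxOn {u σ v : ℝ}
    (h : IsMaxOn (fun w => w * gaussCDF ((u - w) / σ)) univ v) :
    gaussCDF ((u - v) / σ) = v / σ * gaussPDF ((u - v) / σ) :=
  sub_eq_zero.1 ((h.isLocalMax univ_mem).hasDerivAt_eq_zero (hasDerivAt_mul_gaussCDF u σ v))

lemma mul_gaussCDF_sqrt_pi_div_two_sub_le (w : ℝ) :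
    w * gaussCDF (√(π / 2) - w) ≤ √(π / 2) / 2 := by
  set u := √(π / 2) with hu_def
  have hu : 0 < u := by positivity
  rcases le_total w 0 with hw | hw
  · nlinarith [gaussCDF_nonneg (u - w)]
  rcases le_total w u with hwu | hwu
  · have hΦ := gaussCDF_le_half_add (sub_nonneg.2 hwu)
    have hwc : w * gaussPDF 0 ≤ 1 / 2 := sqrt_pi_div_two_mul_gaussPDF_zero ▸
      mul_le_mul_of_nonneg_right hwu (gaussPDF_pos 0).le
    calc w * gaussCDF (u - w) ≤ w * (1 / 2 + gaussPDF 0 * (u - w)) :=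
          mul_le_mul_of_nonneg_left hΦ hw
      _ ≤ u / 2 := by nlinarith
  · have hanti : AntitoneOn (fun w => w * gaussCDF (u - w)) (Ici u) := by
      have hderiv := fun w => hasDerivAt_mul_gaussCDF u 1 w
      simp only [div_one] at hderiv
      refine antitoneOn_of_hasDerivWithinAt_nonpos (convex_Ici u)
        (HasDerivAt.continuousOn fun y _ => hderiv y) (fun y _ => (hderiv y).hasDerivWithinAt)
        fun y hy => ?_
      rw [interior_Ici] at hy
      have := gaussCDF_neg_le_mul_gaussPDF (sub_nonneg.2 hy.le)
      rw [neg_sub, ← gaussPDF_neg, neg_sub, ← hu_def, add_sub_cancel] at this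
      linarith
    have := hanti self_mem_Ici hwu hwu
    simp only [sub_self, gaussCDF_zero] at this
    linarith

lemma gaussCDF_lt_div_mul_gaussPDF {σ v : ℝ} (hσ : 0 < σ) (hσ1 : σ < 1) (hv : √(π / 2) ≤ v) :
    gaussCDF ((√(π / 2) - v) / σ) < v / σ * gaussPDF ((√(π / 2) - v) / σ) := by
  set u := √(π / 2)
  have hu : 0 < u := by positivity
  set x := (v - u) / σ with hx_def
  have hx : 0 ≤ x := div_nonneg (sub_nonneg.2 hv) hσ.le
  have harg : (u - v) / σ = -x := by rw [hx_def]; ring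
  have hv_div : v / σ = u / σ + x := by rw [hx_def]; ring
  have hu_lt : u < u / σ := (lt_div_iff₀ hσ).2 (by nlinarith)
  rw [harg, gaussPDF_neg, hv_div]
  calc gaussCDF (-x) ≤ (u + x) * gaussPDF x := gaussCDF_neg_le_mul_gaussPDF hx
    _ < (u / σ + x) * gaussPDF x := by gcongr; exact gaussPDF_pos x

/-- With `J σ u` the unique maximizer of `v ↦ v Φ((u - v)/σ)`,
`u* = √(π/2)` is the unique fixed point of `J 1`, and for any
`σ ∈ (1/2, 1)`, `J σ u* < u*`. -/
theorem stmt_15 (J : ℝ → ℝ → ℝ)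
    (hJmax : ∀ σ : ℝ, 0 < σ → ∀ u v : ℝ,
      v * gaussCDF ((u - v) / σ) ≤ J σ u * gaussCDF ((u - J σ u) / σ))
    (hJuniq : ∀ σ : ℝ, 0 < σ → ∀ u v : ℝ,
      (∀ w : ℝ, w * gaussCDF ((u - w) / σ) ≤ v * gaussCDF ((u - v) / σ)) →
        v = J σ u) :
    (∀ u : ℝ, J 1 u = u ↔ u = Real.sqrt (Real.pi / 2)) ∧
      ∀ σ ∈ Set.Ioo (1 / 2 : ℝ) 1,
        J σ (Real.sqrt (Real.pi / 2)) < Real.sqrt (Real.pi / 2) := by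
  have hcrit : ∀ σ, 0 < σ → ∀ u,
      gaussCDF ((u - J σ u) / σ) = J σ u / σ * gaussPDF ((u - J σ u) / σ) :=
    fun σ hσ u => gaussCDF_eq_of_isMaxOn (isMaxOn_univ_iff.2 (hJmax σ hσ u))
  refine ⟨fun u => ⟨fun hfix => ?_, ?_⟩, fun σ ⟨hσ, hσ1⟩ => ?_⟩
  · have h := hcrit 1 one_pos u
    rw [hfix, sub_self, zero_div, gaussCDF_zero, div_one] at h
    exact eq_sqrt_pi_div_two_of_mul_gaussPDF_zero h.symm
  · rintro rfl
    refine (hJuniq 1 one_pos _ _ fun w => ?_).symm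
    simpa only [div_one, sub_self, gaussCDF_zero, mul_one_div] using
      mul_gaussCDF_sqrt_pi_div_two_sub_le w
  · by_contra! h
    exact (gaussCDF_lt_div_mul_gaussPDF (by linarith) hσ1 h).ne (hcrit σ (by linarith) _)
end
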